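/- Let G be a diregular (2,k,+2)-digraph (k ≥ 3) with u, v having unique common out-neighbour u₂ as above. Then T_{k−3}(v₁) ∩ N^{k−1}(u₁) = ∅ and T_{k−3}(u₁) ∩ N^{k−1}(v₁) = ∅. -/

import Mathlib

open scoped Classical

/-- There is a directed walk of length `n` from `u` to `v` in the digraph with
arc relation `A` (the walk is recorded as its list of `n+1` vertices). -/
def HasWalkLen {V : Type*} (A : V → V → Prop) (n : ℕ) (u v : V) : Prop :=
  ∃ l : List V, l.head? = some u ∧ l.getLast? = some v ∧ l.Chain' A ∧ l.length = n + 1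

/-- The distance from `u` to `v` is at most `n`. -/
def DistLe {V : Type*} (A : V → V → Prop) (n : ℕ) (u v : V) : Prop :=
  ∃ m ≤ n, HasWalkLen A m u v

/-- The distance from `u` to `v` is exactly `n`. -/
def DistEq {V : Type*} (A : V → V → Prop) (n : ℕ) (u v : V) : Prop :=
  HasWalkLen A n u v ∧ ∀ m < n, ¬ HasWalkLen A m u v

/-- A digraph is `k`-geodetic: between any ordered pair of vertices there is at
most one directed path of length at most `k`. -/
def Geodetic {V : Type*} (A : V → V → Prop) (k : ℕ) : Prop :=
  ∀ u v : V, ∀ l₁ l₂ : List V,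
    (l₁.head? = some u ∧ l₁.getLast? = some v ∧ l₁.Chain' A ∧ l₁.length ≤ k + 1) →
    (l₂.head? = some u ∧ l₂.getLast? = some v ∧ l₂.Chain' A ∧ l₂.length ≤ k + 1) →
    l₁ = l₂

/-- Out-neighbourhood. -/
def Nplus {V : Type*} (A : V → V → Prop) (u : V) : Set V := {v | A u v}

/-- Out-degree. -/
noncomputable def outDeg {V : Type*} (A : V → V → Prop) (u : V) : ℕ := {v | A u v}.ncard

/-- In-degree. -/
noncomputable def inDeg {V : Type*} (A : V → V → Prop) (u : V) : ℕ := {v | A v u}.ncard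

/-- `T_k(u)`: the set of vertices at distance at most `k` from `u`. -/
def Tset {V : Type*} (A : V → V → Prop) (k : ℕ) (u : V) : Set V := {v | DistLe A k u v}

/-- `O(u)`: the outliers of `u`, i.e. vertices at distance at least `k+1` from `u`. -/
def Outliers {V : Type*} (A : V → V → Prop) (k : ℕ) (u : V) : Set V := {v | ¬ DistLe A k u v}

/-! Being `k`-geodetic and out-regular of degree 2, the digraph has exactly `2^{k+1} - 1`
vertices in every ball `T_k(w)`, so every vertex has exactly two outliers.

First, `v₁ ∈ O(u)`. A path `u → u₁ ⇝ v₁` of length `t + 1 ≤ k` forces the `2^{k-t}` vertices at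
distance `k - t` from `v₁` into `{u} ∪ O(u)`, so `t = k - 1` and `O(u) = N⁺(v₁)`. Then
`v ∈ T_k(u)`, and a path of length at most `k` from `u` to `v`, extended by `v → v₁` or `v → u₂`,
gives a second short path to `v₁` or to `u₂`.

If `z ∈ T_{k-3}(v₁)` is at distance `k - 1` from `u₁`, then every out-neighbour of `z` is an outlier
of `u` (a path to it through `u₁` or `u₂` would again duplicate a short path), and none of them is
`v₁`. With `v₁` this gives three outliers of `u`. The second claim is the first with the roles of
`u` and `v` exchanged. -/

open Finset

section Walks

variable {V : Type*} {A : V → V → Prop} {m n : ℕ} {u v w : V}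

theorem hasWalkLen_zero_iff : HasWalkLen A 0 u v ↔ u = v := by
  constructor
  · rintro ⟨l, hhead, hlast, -, hlen⟩
    obtain ⟨a, rfl⟩ := List.length_eq_one_iff.mp hlen
    simp_all
  · rintro rfl
    exact ⟨[u], rfl, rfl, List.isChain_singleton u, rfl⟩

theorem HasWalkLen.rfl : HasWalkLen A 0 u u := hasWalkLen_zero_iff.mpr (Eq.refl u)

theorem hasWalkLen_succ_iff : HasWalkLen A (n + 1) u v ↔ ∃ a, A u a ∧ HasWalkLen A n a v := by
  constructor
  · rintro ⟨_ | ⟨x, _ | ⟨a, l⟩⟩, hhead, hlast, hchain, hlen⟩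
    · simp at hlen
    · simp at hlen
    · obtain rfl : x = u := by simpa using hhead
      have hchain : List.IsChain A (x :: a :: l) := hchain
      exact ⟨a, hchain.rel, a :: l, rfl, by simpa using hlast, hchain.tail, by simpa using hlen⟩
  · rintro ⟨a, hua, l, hhead, hlast, hchain, hlen⟩
    refine ⟨u :: l, rfl, ?_, List.isChain_cons.mpr ⟨by simpa [hhead], hchain⟩, by simp [hlen]⟩
    simp [List.getLast?_cons, hlast]

theorem hasWalkLen_flip : HasWalkLen (flip A) n v u ↔ HasWalkLen A n u v := by
  constructor <;>
  · rintro ⟨l, hhead, hlast, hchain, hlen⟩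
    refine ⟨l.reverse, by simpa using hlast, by simpa using hhead, ?_, by simpa using hlen⟩
    exact List.isChain_reverse.mpr hchain

theorem hasWalkLen_succ_iff' : HasWalkLen A (n + 1) u v ↔ ∃ a, HasWalkLen A n u a ∧ A a v := by
  simp only [← hasWalkLen_flip (A := A), hasWalkLen_succ_iff, flip, and_comm]

theorem HasWalkLen.concat (h : HasWalkLen A n u v) (hvw : A v w) : HasWalkLen A (n + 1) u w :=
  hasWalkLen_succ_iff'.mpr ⟨v, h, hvw⟩

theorem HasWalkLen.single (huv : A u v) : HasWalkLen A 1 u v := HasWalkLen.rfl.concat huv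

theorem HasWalkLen.append (h₁ : HasWalkLen A m u v) (h₂ : HasWalkLen A n v w) :
    HasWalkLen A (m + n) u w := by
  induction n generalizing w with
  | zero => rwa [hasWalkLen_zero_iff.mp h₂] at h₁
  | succ n ih =>
    obtain ⟨x, hx, hxw⟩ := hasWalkLen_succ_iff'.mp h₂
    exact (ih hx).concat hxw

end Walks

section Geodetic

variable {V : Type*} {A : V → V → Prop} {k m n : ℕ} {u v a b x : V}

theorem Geodetic.flip (hgeo : Geodetic A k) : Geodetic (flip A) k := by
  rintro u v l₁ l₂ ⟨hhead₁, hlast₁, hchain₁, hlen₁⟩ ⟨hhead₂, hlast₂, hchain₂, hlen₂⟩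
  refine List.reverse_injective (hgeo v u _ _ ⟨?_, ?_, ?_, ?_⟩ ⟨?_, ?_, ?_, ?_⟩)
  all_goals first
    | simpa
    | exact List.isChain_reverse.mpr (by assumption)

theorem Geodetic.length_eq (hgeo : Geodetic A k) (h₁ : HasWalkLen A m u v)
    (h₂ : HasWalkLen A n u v) (hm : m ≤ k) (hn : n ≤ k) : m = n := by
  obtain ⟨l₁, hhead₁, hlast₁, hchain₁, hlen₁⟩ := h₁
  obtain ⟨l₂, hhead₂, hlast₂, hchain₂, hlen₂⟩ := h₂
  have := hgeo u v l₁ l₂ ⟨hhead₁, hlast₁, hchain₁, by omega⟩ ⟨hhead₂, hlast₂, hchain₂, by omega⟩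
  subst this
  omega

theorem Geodetic.not_hasWalkLen_self (hgeo : Geodetic A k) (hn₀ : 0 < n) (hn : n ≤ k) :
    ¬ HasWalkLen A n u u := fun h => by
  have := hgeo.length_eq h .rfl hn (Nat.zero_le k)
  omega

theorem Geodetic.eq_of_adj_of_hasWalkLen (hgeo : Geodetic A k) (hua : A u a) (hub : A u b)
    (ha : HasWalkLen A m a x) (hb : HasWalkLen A n b x) (hm : m + 1 ≤ k) (hn : n + 1 ≤ k) :
    a = b := by
  obtain ⟨l₁, hhead₁, hlast₁, hchain₁, hlen₁⟩ := ha
  obtain ⟨l₂, hhead₂, hlast₂, hchain₂, hlen₂⟩ := hb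
  have key : u :: l₁ = u :: l₂ := by
    refine hgeo u x _ _ ⟨rfl, ?_, ?_, ?_⟩ ⟨rfl, ?_, ?_, ?_⟩
    all_goals first
      | exact List.isChain_cons.mpr ⟨by simp [*], by assumption⟩
      | simp [List.getLast?_cons, *]
  simpa [hhead₁, hhead₂] using congrArg List.head? (List.cons.inj key).2

theorem Geodetic.eq_of_hasWalkLen_of_adj (hgeo : Geodetic A k) (ha : HasWalkLen A m u a)
    (hax : A a x) (hb : HasWalkLen A n u b) (hbx : A b x) (hm : m + 1 ≤ k) (hn : n + 1 ≤ k) :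
    a = b :=
  hgeo.flip.eq_of_adj_of_hasWalkLen hax hbx (hasWalkLen_flip.mpr ha) (hasWalkLen_flip.mpr hb) hm hn

end Geodetic

section Counting

variable {V : Type*} [Fintype V] {A : V → V → Prop} {k n : ℕ}

theorem card_filter_adj (hdeg : ∀ w, outDeg A w = 2) (x : V) : #{y | A x y} = 2 := by
  rw [← hdeg x, outDeg, ← Set.ncard_coe_finset, coe_filter_univ]

theorem Geodetic.card_filter_hasWalkLen (hgeo : Geodetic A k) (hdeg : ∀ w, outDeg A w = 2)
    (hn : n ≤ k) (w : V) : #{x | HasWalkLen A n w x} = 2 ^ n := by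
  induction n with
  | zero => simp [hasWalkLen_zero_iff, filter_eq]
  | succ n ih =>
    have hlevel : ({x | HasWalkLen A (n + 1) w x} : Finset V) =
        ({x | HasWalkLen A n w x} : Finset V).biUnion (fun b => {y | A b y}) := by
      ext y
      simp [hasWalkLen_succ_iff']
    have hdisj : Set.PairwiseDisjoint ({x | HasWalkLen A n w x} : Finset V)
        (fun b => ({y | A b y} : Finset V)) := by
      intro a ha b hb hab
      simp only [coe_filter_univ, Set.mem_ofPred_eq] at ha hb
      exact disjoint_left.mpr fun y hay hby =>
        hab (hgeo.eq_of_hasWalkLen_of_adj ha (by simpa using hay) hb (by simpa using hby) hn hn)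
    rw [hlevel, card_biUnion hdisj, sum_congr rfl fun x _ => card_filter_adj hdeg x, sum_const,
      ih (by omega), smul_eq_mul, pow_succ]

theorem Geodetic.card_filter_distLe (hgeo : Geodetic A k) (hdeg : ∀ w, outDeg A w = 2) (w : V) :
    #{x | DistLe A k w x} = 2 ^ (k + 1) - 1 := by
  have hball : ({x | DistLe A k w x} : Finset V) =
      (range (k + 1)).biUnion (fun n => {x | HasWalkLen A n w x}) := by
    ext y
    simp only [mem_filter, mem_univ, true_and, mem_biUnion, mem_range, Nat.lt_succ_iff]
    rfl
  have hdisj : Set.PairwiseDisjoint (range (k + 1) : Finset ℕ)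
      (fun n => ({x | HasWalkLen A n w x} : Finset V)) := by
    intro m hm n hn hmn
    simp only [coe_range, Set.mem_Iio, Nat.lt_succ_iff] at hm hn
    exact disjoint_left.mpr fun y hmy hny =>
      hmn (hgeo.length_eq (by simpa using hmy) (by simpa using hny) hm hn)
  rw [hball, card_biUnion hdisj,
    sum_congr rfl fun n hn =>
      hgeo.card_filter_hasWalkLen hdeg (by simpa [Nat.lt_succ_iff] using hn) w,
    Nat.geomSum_eq le_rfl]
  simp

theorem Geodetic.ncard_outliers (hgeo : Geodetic A k) (hdeg : ∀ w, outDeg A w = 2)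
    (hcard : Fintype.card V = 2 ^ (k + 1) + 1) (w : V) : (Outliers A k w).ncard = 2 := by
  have hball : (Tset A k w).ncard = 2 ^ (k + 1) - 1 := by
    rw [← hgeo.card_filter_distLe hdeg w, ← Set.ncard_coe_finset, coe_filter_univ]
    rfl
  have hsplit := Set.ncard_add_ncard_compl (Tset A k w)
  rw [Nat.card_eq_fintype_card, hcard, hball] at hsplit
  have := Nat.one_le_two_pow (n := k + 1)
  change (Tset A k w)ᶜ.ncard = 2
  omega

end Counting

section Configuration

variable {V : Type*} {A : V → V → Prop} {k n : ℕ} {u v u₁ u₂ v₁ x y : V}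

theorem adj_iff_of_nplus_eq (hu : Nplus A u = {u₁, u₂}) : A u x ↔ x = u₁ ∨ x = u₂ :=
  Set.ext_iff.mp hu x

theorem adj_of_nplus_eq (hu : Nplus A u = {u₁, u₂}) : A u u₁ ∧ A u u₂ :=
  ⟨(adj_iff_of_nplus_eq hu).mpr (.inl rfl), (adj_iff_of_nplus_eq hu).mpr (.inr rfl)⟩

theorem hasWalkLen_succ_of_nplus_eq (hu : Nplus A u = {u₁, u₂})
    (h : HasWalkLen A (n + 1) u y) : HasWalkLen A n u₁ y ∨ HasWalkLen A n u₂ y := by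
  obtain ⟨x, hux, hx⟩ := hasWalkLen_succ_iff.mp h
  rcases (adj_iff_of_nplus_eq hu).mp hux with rfl | rfl
  exacts [.inl hx, .inr hx]

theorem Geodetic.setOf_hasWalkLen_subset_insert_outliers (hgeo : Geodetic A k)
    (hu : Nplus A u = {u₁, u₂}) (hv : Nplus A v = {v₁, u₂}) (hv₁u₂ : v₁ ≠ u₂) {t : ℕ}
    (ht : HasWalkLen A t u₁ v₁) (ht₀ : 0 < t) (htk : t ≤ k) :
    {y | HasWalkLen A (k - t) v₁ y} ⊆ insert u (Outliers A k u) := by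
  intro y hy
  rw [Set.mem_insert_iff, or_iff_not_imp_left]
  rintro hyu ⟨_ | s, hs, hw⟩
  · exact hyu (hasWalkLen_zero_iff.mp hw).symm
  rcases hasWalkLen_succ_of_nplus_eq hu hw with hw | hw
  · have := hgeo.length_eq (ht.append hy) hw (by omega) (by omega)
    omega
  · exact hv₁u₂ (hgeo.eq_of_adj_of_hasWalkLen (adj_of_nplus_eq hv).1 (adj_of_nplus_eq hv).2
      hy hw (by omega) (by omega))

theorem Geodetic.nplus_subset_outliers (hgeo : Geodetic A k) (hv₁u₂ : v₁ ≠ u₂)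
    (hu : Nplus A u = {u₁, u₂}) (hv : Nplus A v = {v₁, u₂}) {z : V} {d : ℕ} (hd : d + 3 ≤ k)
    (hv₁z : HasWalkLen A d v₁ z) (hu₁z : HasWalkLen A (k - 1) u₁ z) :
    Nplus A z ⊆ Outliers A k u := by
  obtain ⟨-, huu₂⟩ := adj_of_nplus_eq hu
  obtain ⟨hvv₁, hvu₂⟩ := adj_of_nplus_eq hv
  rintro w (hzw : A z w) ⟨_ | s, hs, hw⟩
  · obtain rfl := hasWalkLen_zero_iff.mp hw
    have := hgeo.length_eq (((HasWalkLen.single hvv₁).append hv₁z).concat hzw |>.concat huu₂)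
      (.single hvu₂) (by omega) (by omega)
    omega
  rcases hasWalkLen_succ_of_nplus_eq hu hw with hw' | hw'
  · have := hgeo.length_eq (hu₁z.concat hzw) hw' (by omega) (by omega)
    omega
  · exact hv₁u₂ (hgeo.eq_of_adj_of_hasWalkLen hvv₁ hvu₂ (hv₁z.concat hzw) hw' (by omega) (by omega))

variable [Fintype V]

theorem Geodetic.eq_sub_one_of_hasWalkLen (hgeo : Geodetic A k) (hdeg : ∀ w, outDeg A w = 2)
    (hcard : Fintype.card V = 2 ^ (k + 1) + 1)
    (hu : Nplus A u = {u₁, u₂}) (hv : Nplus A v = {v₁, u₂}) (hv₁u₂ : v₁ ≠ u₂) {t : ℕ}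
    (ht : HasWalkLen A t u₁ v₁) (ht₀ : 0 < t) (htk : t < k) : t = k - 1 := by
  have hlevel : 2 ^ (k - t) ≤ 3 :=
    calc 2 ^ (k - t) = {y | HasWalkLen A (k - t) v₁ y}.ncard := by
          rw [← hgeo.card_filter_hasWalkLen hdeg (Nat.sub_le k t), ← Set.ncard_coe_finset,
            coe_filter_univ]
      _ ≤ (insert u (Outliers A k u)).ncard :=
          Set.ncard_le_ncard
            (hgeo.setOf_hasWalkLen_subset_insert_outliers hu hv hv₁u₂ ht ht₀ htk.le)
      _ ≤ (Outliers A k u).ncard + 1 := Set.ncard_insert_le _ _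
      _ = 3 := by rw [hgeo.ncard_outliers hdeg hcard]
  by_contra hne
  have : 2 ^ 2 ≤ 2 ^ (k - t) := Nat.pow_le_pow_right two_pos (by omega)
  omega

theorem Geodetic.not_hasWalkLen_sub_one (hk : 3 ≤ k) (hgeo : Geodetic A k)
    (hdeg : ∀ w, outDeg A w = 2) (hcard : Fintype.card V = 2 ^ (k + 1) + 1) (huv : u ≠ v)
    (hu : Nplus A u = {u₁, u₂}) (hv : Nplus A v = {v₁, u₂}) (hv₁u₂ : v₁ ≠ u₂) :
    ¬ HasWalkLen A (k - 1) u₁ v₁ := by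
  intro h
  obtain ⟨-, huu₂⟩ := adj_of_nplus_eq hu
  obtain ⟨hvv₁, hvu₂⟩ := adj_of_nplus_eq hv
  have hsub : Nplus A v₁ ⊆ Outliers A k u := by
    intro x hx
    have hlevel : HasWalkLen A (k - (k - 1)) v₁ x := by
      rw [show k - (k - 1) = 1 by omega]
      exact .single hx
    refine (hgeo.setOf_hasWalkLen_subset_insert_outliers hu hv hv₁u₂ h (by omega) (by omega)
      hlevel).resolve_left ?_
    rintro rfl
    have := hgeo.length_eq ((HasWalkLen.single hvv₁).concat hx |>.concat huu₂) (.single hvu₂)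
      (by omega) (by omega)
    omega
  have hOu : Nplus A v₁ = Outliers A k u :=
    Set.eq_of_subset_of_ncard_le hsub (by rw [hgeo.ncard_outliers hdeg hcard]; exact (hdeg v₁).ge)
  have hvT : DistLe A k u v := by
    by_contra hvO
    have hv₁v : v ∈ Nplus A v₁ := hOu ▸ hvO
    exact hgeo.not_hasWalkLen_self (n := 2) (by omega) (by omega)
      ((HasWalkLen.single hvv₁).concat hv₁v)
  obtain ⟨_ | s, hs, hw⟩ := hvT
  · exact huv (hasWalkLen_zero_iff.mp hw)
  rcases hasWalkLen_succ_of_nplus_eq hu hw with hw' | hw'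
  · have h₁ := hgeo.length_eq (hw'.concat hvv₁) h (by omega) (by omega)
    have h₂ := hgeo.length_eq (hw.concat hvu₂) (.single huu₂) (by omega) (by omega)
    omega
  · exact hgeo.not_hasWalkLen_self (by omega) (by omega) (hw'.concat hvu₂)

theorem Geodetic.mem_outliers_of_nplus_eq (hk : 3 ≤ k) (hgeo : Geodetic A k)
    (hdeg : ∀ w, outDeg A w = 2) (hcard : Fintype.card V = 2 ^ (k + 1) + 1) (huv : u ≠ v)
    (hv₁u₂ : v₁ ≠ u₂) (hu₁v₁ : u₁ ≠ v₁) (hu : Nplus A u = {u₁, u₂}) (hv : Nplus A v = {v₁, u₂}) :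
    v₁ ∈ Outliers A k u := by
  obtain ⟨-, huu₂⟩ := adj_of_nplus_eq hu
  obtain ⟨hvv₁, hvu₂⟩ := adj_of_nplus_eq hv
  rintro ⟨_ | t, ht, hw⟩
  · obtain rfl := hasWalkLen_zero_iff.mp hw
    have := hgeo.length_eq ((HasWalkLen.single hvv₁).concat huu₂) (.single hvu₂)
      (by omega) (by omega)
    omega
  rcases hasWalkLen_succ_of_nplus_eq hu hw with hw' | hw'
  · have ht₀ : 0 < t := Nat.pos_of_ne_zero fun ht₀ => hu₁v₁ (hasWalkLen_zero_iff.mp (ht₀ ▸ hw'))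
    have htk := hgeo.eq_sub_one_of_hasWalkLen hdeg hcard hu hv hv₁u₂ hw' ht₀ (by omega)
    exact hgeo.not_hasWalkLen_sub_one hk hdeg hcard huv hu hv hv₁u₂ (htk ▸ hw')
  · exact hv₁u₂ (hgeo.eq_of_adj_of_hasWalkLen hvv₁ hvu₂ .rfl hw' (by omega) (by omega))

theorem Geodetic.tset_inter_distEq_eq_empty (hk : 3 ≤ k) (hgeo : Geodetic A k)
    (hdeg : ∀ w, outDeg A w = 2) (hcard : Fintype.card V = 2 ^ (k + 1) + 1) (huv : u ≠ v)
    (hv₁u₂ : v₁ ≠ u₂) (hu₁v₁ : u₁ ≠ v₁) (hu : Nplus A u = {u₁, u₂}) (hv : Nplus A v = {v₁, u₂}) :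
    Tset A (k - 3) v₁ ∩ {w | DistEq A (k - 1) u₁ w} = ∅ := by
  refine Set.eq_empty_iff_forall_notMem.mpr ?_
  rintro z ⟨⟨d, hd, hv₁z⟩, hu₁z, -⟩
  have hsub : insert v₁ (Nplus A z) ⊆ Outliers A k u :=
    Set.insert_subset (hgeo.mem_outliers_of_nplus_eq hk hdeg hcard huv hv₁u₂ hu₁v₁ hu hv)
      (hgeo.nplus_subset_outliers hv₁u₂ hu hv (by omega) hv₁z hu₁z)
  have hv₁ : v₁ ∉ Nplus A z := fun hzv₁ =>
    hgeo.not_hasWalkLen_self (by omega) (by omega) (hv₁z.concat hzv₁)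
  have := Set.ncard_le_ncard hsub
  rw [Set.ncard_insert_of_notMem hv₁, hgeo.ncard_outliers hdeg hcard] at this
  have hz : (Nplus A z).ncard = 2 := hdeg z
  omega

end Configuration

/-- In a diregular `(2,k,+2)`-digraph with `k ≥ 3` and `u, v` having unique
common out-neighbour `u₂`: `T_{k−3}(v₁) ∩ N^{k−1}(u₁) = ∅` and
`T_{k−3}(u₁) ∩ N^{k−1}(v₁) = ∅`. -/
theorem stmt_16 {V : Type*} [Fintype V] (A : V → V → Prop) (k : ℕ) (hk : 3 ≤ k)
    (hgeo : Geodetic A k)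
    (hdeg : ∀ w, outDeg A w = 2 ∧ inDeg A w = 2)
    (hcard : Fintype.card V = 2 ^ (k + 1) + 1)
    (u v u₁ u₂ v₁ : V) (huv : u ≠ v)
    (h12 : u₁ ≠ u₂) (hv2 : v₁ ≠ u₂) (h11 : u₁ ≠ v₁)
    (hu : Nplus A u = {u₁, u₂}) (hv : Nplus A v = {v₁, u₂}) :
    Tset A (k - 3) v₁ ∩ {w | DistEq A (k - 1) u₁ w} = ∅ ∧
    Tset A (k - 3) u₁ ∩ {w | DistEq A (k - 1) v₁ w} = ∅ := by
  have hout : ∀ w, outDeg A w = 2 := fun w => (hdeg w).1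
  exact ⟨hgeo.tset_inter_distEq_eq_empty hk hout hcard huv hv2 h11 hu hv,
    hgeo.tset_inter_distEq_eq_empty hk hout hcard huv.symm h12 h11.symm hv hu⟩
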